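/- Let (R₁, Ad_{Γ₁}) and (R₂, Ad_{Γ₂}) be graded von Neumann algebras on H₁, H₂, with A ∈ (R₁)^(0) and B ∈ (R₂)^(0). Then the central support of the operator A ⊗ B in the graded tensor product R₁ ⊗̂ R₂ equals its central support in the ordinary von Neumann tensor product R₁ ⊗̄ R₂. -/
import Mathlib


noncomputable section

variable {H : Type*} [NormedAddCommGroup H] [InnerProductSpace ℂ H] [CompleteSpace H]

/-- A self-adjoint unitary operator. -/
def IsSAU (Γ : H →L[ℂ] H) : Prop := star Γ = Γ ∧ Γ * Γ = 1

/-- The even part of a graded set of operators. -/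
def evenPart (R : Set (H →L[ℂ] H)) (Γ : H →L[ℂ] H) : Set (H →L[ℂ] H) :=
  {x | x ∈ R ∧ Γ * x * Γ = x}

/-- The odd part of a graded set of operators. -/
def oddPart (R : Set (H →L[ℂ] H)) (Γ : H →L[ℂ] H) : Set (H →L[ℂ] H) :=
  {x | x ∈ R ∧ Γ * x * Γ = -x}

/-- The center of a set of operators. -/
def centerSet (R : Set (H →L[ℂ] H)) : Set (H →L[ℂ] H) :=
  {x | x ∈ R ∧ ∀ y ∈ R, x * y = y * x}

/-- An (orthogonal) projection operator. -/
def IsProjOp (e : H →L[ℂ] H) : Prop := e * e = e ∧ star e = e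

/-- `e` is a subprojection of `f`. -/
def SubProj (e f : H →L[ℂ] H) : Prop := e * f = e ∧ f * e = e

/-- Murray–von Neumann equivalence of projections relative to `M`. -/
def MvNEquiv (M : Set (H →L[ℂ] H)) (e f : H →L[ℂ] H) : Prop :=
  ∃ v ∈ M, star v * v = e ∧ v * star v = f

/-- `e` is finite relative to `M`. -/
def FiniteProj (M : Set (H →L[ℂ] H)) (e : H →L[ℂ] H) : Prop :=
  ∀ f ∈ M, IsProjOp f → SubProj f e → MvNEquiv M f e → f = e

/-- `e` is an abelian projection relative to `M`: the corner `eMe` is commutative. -/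
def AbelianProj (M : Set (H →L[ℂ] H)) (e : H →L[ℂ] H) : Prop :=
  ∀ x ∈ M, ∀ y ∈ M, (e * x * e) * (e * y * e) = (e * y * e) * (e * x * e)

/-- A von Neumann algebra (given as a set) is of type III: no nonzero finite projections. -/
def TypeIII (M : Set (H →L[ℂ] H)) : Prop :=
  ∀ e ∈ M, IsProjOp e → FiniteProj M e → e = 0

/-- Type II₁ : finite with no nonzero abelian projections. -/
def TypeII1 (M : Set (H →L[ℂ] H)) : Prop :=
  FiniteProj M 1 ∧ ∀ e ∈ M, IsProjOp e → AbelianProj M e → e = 0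

/-- Type I_n : the identity is the sum of `n` orthogonal, mutually equivalent
abelian projections. -/
def TypeI (M : Set (H →L[ℂ] H)) (n : Cardinal) : Prop :=
  ∃ (ι : Type) (E : ι → H →L[ℂ] H), Cardinal.mk ι = n ∧
    (∀ a, E a ∈ M ∧ IsProjOp (E a) ∧ AbelianProj M (E a)) ∧
    (Pairwise fun a b => E a * E b = 0) ∧
    (∀ a b, MvNEquiv M (E a) (E b)) ∧
    (∀ v : H, HasSum (fun a => (E a) v) v)

/-- The scalar operators. -/
def scalarOps (H : Type*) [NormedAddCommGroup H] [InnerProductSpace ℂ H] [CompleteSpace H] :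
    Set (H →L[ℂ] H) := Set.range fun c : ℂ => c • (1 : H →L[ℂ] H)

/-- `M` is a factor. -/
def IsFactor (M : Set (H →L[ℂ] H)) : Prop := centerSet M = scalarOps H

/-- `R` is graded by the self-adjoint unitary `Γ`. -/
def GradedBy (R : Set (H →L[ℂ] H)) (Γ : H →L[ℂ] H) : Prop :=
  IsSAU Γ ∧ ∀ x ∈ R, Γ * x * Γ ∈ R

/-- The von Neumann algebra generated by a (star-closed, unital) set:
its double commutant. -/
def genVN (S : Set (H →L[ℂ] H)) : Set (H →L[ℂ] H) :=
  Set.centralizer (Set.centralizer S)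

/-- `c` is the central support of `T` in `M`. -/
def IsCentralSupport (M : Set (H →L[ℂ] H)) (T c : H →L[ℂ] H) : Prop :=
  c ∈ centerSet M ∧ IsProjOp c ∧ c * T = T ∧
    ∀ d ∈ centerSet M, IsProjOp d → d * T = T → c * d = c

section Tensor

variable {H₁ H₂ K : Type*}
  [NormedAddCommGroup H₁] [InnerProductSpace ℂ H₁] [CompleteSpace H₁]
  [NormedAddCommGroup H₂] [InnerProductSpace ℂ H₂] [CompleteSpace H₂]
  [NormedAddCommGroup K] [InnerProductSpace ℂ K] [CompleteSpace K]

/-- `T` realizes the (spatial) tensor product of operators: it is bilinear,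
multiplicative, star-preserving and unital, modelling `A ⊗ B` on `H₁ ⊗ H₂ = K`. -/
def IsTensorMap (T : (H₁ →L[ℂ] H₁) → (H₂ →L[ℂ] H₂) → (K →L[ℂ] K)) : Prop :=
  T 1 1 = 1 ∧
  (∀ A B C D, T A B * T C D = T (A * C) (B * D)) ∧
  (∀ A B, star (T A B) = T (star A) (star B)) ∧
  (∀ A A' B, T (A + A') B = T A B + T A' B) ∧
  (∀ A B B', T A (B + B') = T A B + T A B') ∧
  (∀ (c : ℂ) A B, T (c • A) B = c • T A B) ∧
  (∀ (c : ℂ) A B, T A (c • B) = c • T A B)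

/-- The graded tensor product `R₁ ⊗̂ R₂`: the von Neumann algebra generated by the
operators `A Γ₁^(∂B) ⊗ B` for homogeneous `B`. -/
def gradedTP (T : (H₁ →L[ℂ] H₁) → (H₂ →L[ℂ] H₂) → (K →L[ℂ] K))
    (R₁ : Set (H₁ →L[ℂ] H₁)) (Γ₁ : H₁ →L[ℂ] H₁)
    (R₂ : Set (H₂ →L[ℂ] H₂)) (Γ₂ : H₂ →L[ℂ] H₂) : Set (K →L[ℂ] K) :=
  genVN ({x | ∃ A ∈ R₁, ∃ B ∈ evenPart R₂ Γ₂, x = T A B} ∪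
         {x | ∃ A ∈ R₁, ∃ B ∈ oddPart R₂ Γ₂, x = T (A * Γ₁) B})

/-- The ordinary von Neumann tensor product `R₁ ⊗̄ R₂`: generated by simple tensors. -/
def normalTP (T : (H₁ →L[ℂ] H₁) → (H₂ →L[ℂ] H₂) → (K →L[ℂ] K))
    (R₁ : Set (H₁ →L[ℂ] H₁)) (R₂ : Set (H₂ →L[ℂ] H₂)) : Set (K →L[ℂ] K) :=
  genVN {x | ∃ A ∈ R₁, ∃ B ∈ R₂, x = T A B}

end Tensor

section AuxStmt19

lemma conj_invol19 {A : Type*} [Ring A] {g : A} (hg : g * g = 1) (x : A) :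
    g * (g * x * g) * g = x := by
  calc g * (g * x * g) * g = (g * g) * x * (g * g) := by noncomm_ring
    _ = x := by rw [hg, one_mul, mul_one]

lemma add_mem_centralizer19 {A : Type*} [Ring A] {S : Set A} {x y : A}
    (hx : x ∈ S.centralizer) (hy : y ∈ S.centralizer) : x + y ∈ S.centralizer :=
  fun s hs => by rw [mul_add, add_mul, hx s hs, hy s hs]

lemma sub_mem_centralizer19 {A : Type*} [Ring A] {S : Set A} {x y : A}
    (hx : x ∈ S.centralizer) (hy : y ∈ S.centralizer) : x - y ∈ S.centralizer :=
  fun s hs => by rw [mul_sub, sub_mul, hx s hs, hy s hs]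

lemma neg_mem_centralizer19 {A : Type*} [Ring A] {S : Set A} {x : A}
    (hx : x ∈ S.centralizer) : -x ∈ S.centralizer :=
  fun s hs => by rw [mul_neg, neg_mul, hx s hs]

lemma smul_mem_centralizer19 {A : Type*} [Ring A] [Module ℂ A] [SMulCommClass ℂ A A]
    [IsScalarTower ℂ A A] {S : Set A} {x : A} {c : ℂ}
    (hx : x ∈ S.centralizer) : c • x ∈ S.centralizer :=
  fun s hs => by rw [mul_smul_comm, smul_mul_assoc, hx s hs]

lemma ad_mem_centralizer19 {A : Type*} [Ring A] {U : A} (hU2 : U * U = 1) {S : Set A}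
    (hUS : ∀ s ∈ S, U * s * U ∈ S.centralizer.centralizer)
    {x : A} (hx : x ∈ S.centralizer) : U * x * U ∈ S.centralizer := by
  intro s hs
  have h1 : x * (U * s * U) = (U * s * U) * x := hUS s hs x hx
  have h2 : U * (x * (U * s * U)) * U = U * ((U * s * U) * x) * U := by rw [h1]
  have l1 : U * (x * (U * s * U)) * U = (U * x * U) * s * (U * U) := by noncomm_ring
  have l2 : U * ((U * s * U) * x) * U = (U * U) * (s * (U * x * U)) := by noncomm_ring
  rw [l1, l2, hU2, mul_one, one_mul] at h2
  exact h2.symm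

lemma mem_centerSet_genVN19 {H : Type*} [NormedAddCommGroup H] [InnerProductSpace ℂ H]
    [CompleteSpace H] {S : Set (H →L[ℂ] H)} {x : H →L[ℂ] H} :
    x ∈ centerSet (genVN S) ↔ x ∈ genVN S ∧ x ∈ S.centralizer := by
  simp only [centerSet, genVN, Set.mem_setOf_eq]
  constructor
  · rintro ⟨h1, h2⟩
    exact ⟨h1, fun s hs => (h2 s (Set.subset_centralizer_centralizer hs)).symm⟩
  · rintro ⟨h1, h2⟩
    exact ⟨h1, fun y hy => hy x h2⟩

lemma centralSupport_unique19 {H : Type*} [NormedAddCommGroup H] [InnerProductSpace ℂ H]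
    [CompleteSpace H] {M : Set (H →L[ℂ] H)} {T₀ c c' : H →L[ℂ] H}
    (hc : IsCentralSupport M T₀ c) (hc' : IsCentralSupport M T₀ c') : c = c' := by
  have h1 : c * c' = c := hc.2.2.2 c' hc'.1 hc'.2.1 hc'.2.2.1
  have h2 : c' * c = c' := hc'.2.2.2 c hc.1 hc.2.1 hc.2.2.1
  have h3 : c * c' = c' * c := hc.1.2 c' hc'.1.1
  calc c = c * c' := h1.symm
    _ = c' * c := h3
    _ = c' := h2

lemma ad_commute_centralSupport19 {H : Type*} [NormedAddCommGroup H] [InnerProductSpace ℂ H]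
    [CompleteSpace H] {U : H →L[ℂ] H} (hUstar : star U = U) (hU2 : U * U = 1)
    {S : Set (H →L[ℂ] H)} (hUS : ∀ s ∈ S, U * s * U ∈ genVN S)
    {T₀ : H →L[ℂ] H} (hUT : U * T₀ * U = T₀)
    {c : H →L[ℂ] H} (hc : IsCentralSupport (genVN S) T₀ c) : U * c = c * U := by
  have hUT' : U * T₀ = T₀ * U := by
    have h := congrArg (· * U) hUT
    simpa [mul_assoc, hU2] using h
  have hadc : ∀ x ∈ Set.centralizer S, U * x * U ∈ Set.centralizer S :=
    fun x hx => ad_mem_centralizer19 hU2 hUS hx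
  have hadm : ∀ x ∈ genVN S, U * x * U ∈ genVN S := by
    intro x hx
    exact ad_mem_centralizer19 hU2
      (fun s hs => Set.subset_centralizer_centralizer (hadc s hs)) hx
  have hctr : ∀ x ∈ centerSet (genVN S), U * x * U ∈ centerSet (genVN S) := by
    intro x hx
    obtain ⟨h1, h2⟩ := mem_centerSet_genVN19.mp hx
    exact mem_centerSet_genVN19.mpr ⟨hadm x h1, hadc x h2⟩
  have hproj : ∀ x : H →L[ℂ] H, IsProjOp x → IsProjOp (U * x * U) := by
    intro x hx
    constructor
    · calc (U*x*U)*(U*x*U) = U*(x*(U*U)*x)*U := by noncomm_ring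
        _ = U*(x*1*x)*U := by rw [hU2]
        _ = U*(x*x)*U := by rw [mul_one]
        _ = U*x*U := by rw [hx.1]
    · rw [star_mul, star_mul, hUstar, hx.2, ← mul_assoc]
  have hsupp : ∀ x : H →L[ℂ] H, x * T₀ = T₀ → (U * x * U) * T₀ = T₀ := by
    intro x hx
    calc (U*x*U)*T₀ = U*x*(U*T₀) := by noncomm_ring
      _ = U*x*(T₀*U) := by rw [hUT']
      _ = U*(x*T₀)*U := by noncomm_ring
      _ = U*T₀*U := by rw [hx]
      _ = T₀ := hUT
  have hc' : IsCentralSupport (genVN S) T₀ (U * c * U) := by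
    refine ⟨hctr c hc.1, hproj c hc.2.1, hsupp c hc.2.2.1, ?_⟩
    intro d hd hdp hdT
    have h1 : c * (U*d*U) = c := hc.2.2.2 (U*d*U) (hctr d hd) (hproj d hdp) (hsupp d hdT)
    calc (U*c*U)*d = (U*c*U)*d*1 := by rw [mul_one]
      _ = (U*c*U)*d*(U*U) := by rw [hU2]
      _ = U*(c*(U*d*U))*U := by noncomm_ring
      _ = U*c*U := by rw [h1]
  have heq : U * c * U = c := centralSupport_unique19 hc' hc
  have h := congrArg (· * U) heq
  simpa [mul_assoc, hU2] using h

end AuxStmt19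

/-- for even `A ∈ R₁`, `B ∈ R₂`, the central support of `A ⊗ B` in the
graded tensor product `R₁ ⊗̂ R₂` equals its central support in `R₁ ⊗̄ R₂`. -/
theorem stmt_19 {H₁ H₂ K : Type*}
    [NormedAddCommGroup H₁] [InnerProductSpace ℂ H₁] [CompleteSpace H₁]
    [NormedAddCommGroup H₂] [InnerProductSpace ℂ H₂] [CompleteSpace H₂]
    [NormedAddCommGroup K] [InnerProductSpace ℂ K] [CompleteSpace K]
    (T : (H₁ →L[ℂ] H₁) → (H₂ →L[ℂ] H₂) → (K →L[ℂ] K)) (hT : IsTensorMap T)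
    (R₁ : VonNeumannAlgebra H₁) (Γ₁ : H₁ →L[ℂ] H₁)
    (h₁ : GradedBy (R₁ : Set (H₁ →L[ℂ] H₁)) Γ₁)
    (R₂ : VonNeumannAlgebra H₂) (Γ₂ : H₂ →L[ℂ] H₂)
    (h₂ : GradedBy (R₂ : Set (H₂ →L[ℂ] H₂)) Γ₂)
    (A : H₁ →L[ℂ] H₁) (hA : A ∈ evenPart (R₁ : Set (H₁ →L[ℂ] H₁)) Γ₁)
    (B : H₂ →L[ℂ] H₂) (hB : B ∈ evenPart (R₂ : Set (H₂ →L[ℂ] H₂)) Γ₂)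
    (C D : K →L[ℂ] K)
    (hC : IsCentralSupport (gradedTP T (R₁ : Set (H₁ →L[ℂ] H₁)) Γ₁
      (R₂ : Set (H₂ →L[ℂ] H₂)) Γ₂) (T A B) C)
    (hD : IsCentralSupport (normalTP T (R₁ : Set (H₁ →L[ℂ] H₁))
      (R₂ : Set (H₂ →L[ℂ] H₂))) (T A B) D) :
    C = D := by
  obtain ⟨hT1, hTmul, hTstar, hTaddl, hTaddr, hTsml, hTsmr⟩ := hT
  obtain ⟨⟨hΓ₁s, hΓ₁2⟩, hR₁⟩ := h₁
  obtain ⟨⟨hΓ₂s, hΓ₂2⟩, hR₂⟩ := h₂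
  set V := T Γ₁ 1 with hVdef
  set W := T 1 Γ₂ with hWdef
  -- basic tensor calculus
  have hTneg : ∀ (X : H₁ →L[ℂ] H₁) (Y : H₂ →L[ℂ] H₂), T X (-Y) = -T X Y := by
    intro X Y
    rw [← neg_one_smul ℂ Y, hTsmr, neg_one_smul]
  have hΓcomm : ∀ {Y : H₂ →L[ℂ] H₂}, Γ₂ * Y * Γ₂ = Y → Γ₂ * Y = Y * Γ₂ := by
    intro Y hY
    have h := congrArg (· * Γ₂) hY
    simpa [mul_assoc, hΓ₂2] using h
  have hΓanti : ∀ {Y : H₂ →L[ℂ] H₂}, Γ₂ * Y * Γ₂ = -Y → Γ₂ * Y = -(Y * Γ₂) := by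
    intro Y hY
    have h := congrArg (· * Γ₂) hY
    simpa [mul_assoc, hΓ₂2, neg_mul] using h
  have hV2 : V * V = 1 := by rw [hVdef, hTmul, hΓ₁2, one_mul, hT1]
  have hW2 : W * W = 1 := by rw [hWdef, hTmul, hΓ₂2, one_mul, hT1]
  have hVW : V * W = W * V := by rw [hVdef, hWdef, hTmul, hTmul, one_mul, one_mul, mul_one, mul_one]
  have hVstar : star V = V := by rw [hVdef, hTstar, hΓ₁s, star_one]
  have hWstar : star W = W := by rw [hWdef, hTstar, hΓ₂s, star_one]
  have ht_e1 : ∀ (X : H₁ →L[ℂ] H₁) (Y : H₂ →L[ℂ] H₂), T (X * Γ₁) Y * V = T X Y := by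
    intro X Y
    rw [hVdef, hTmul, mul_one, mul_assoc, hΓ₁2, mul_one]
  have ht_e2 : ∀ (X : H₁ →L[ℂ] H₁) (Y : H₂ →L[ℂ] H₂), T X Y * V = T (X * Γ₁) Y := by
    intro X Y
    rw [hVdef, hTmul, mul_one]
  have hconjV : ∀ (X : H₁ →L[ℂ] H₁) (Y : H₂ →L[ℂ] H₂), V * T X Y * V = T (Γ₁ * X * Γ₁) Y := by
    intro X Y
    rw [hVdef, hTmul, hTmul, one_mul, mul_one]
  have hconjW : ∀ (X : H₁ →L[ℂ] H₁) (Y : H₂ →L[ℂ] H₂), W * T X Y * W = T X (Γ₂ * Y * Γ₂) := by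
    intro X Y
    rw [hWdef, hTmul, hTmul, one_mul, mul_one]
  have hWcomm : ∀ (X : H₁ →L[ℂ] H₁) {Y : H₂ →L[ℂ] H₂}, Γ₂ * Y * Γ₂ = Y →
      W * T X Y = T X Y * W := by
    intro X Y hY
    rw [hWdef, hTmul, hTmul, one_mul, mul_one, hΓcomm hY]
  have hWanti : ∀ (X : H₁ →L[ℂ] H₁) {Y : H₂ →L[ℂ] H₂}, Γ₂ * Y * Γ₂ = -Y →
      W * T X Y = -(T X Y * W) := by
    intro X Y hY
    rw [hWdef, hTmul, hTmul, one_mul, mul_one, hΓanti hY]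
    exact hTneg X (Y * Γ₂)
  -- the generating sets
  set SG := ({x | ∃ A ∈ (R₁ : Set (H₁ →L[ℂ] H₁)), ∃ B ∈ evenPart (R₂ : Set (H₂ →L[ℂ] H₂)) Γ₂,
      x = T A B} ∪ {x | ∃ A ∈ (R₁ : Set (H₁ →L[ℂ] H₁)),
      ∃ B ∈ oddPart (R₂ : Set (H₂ →L[ℂ] H₂)) Γ₂, x = T (A * Γ₁) B} : Set (K →L[ℂ] K)) with hSG
  set SN := ({x | ∃ A ∈ (R₁ : Set (H₁ →L[ℂ] H₁)), ∃ B ∈ (R₂ : Set (H₂ →L[ℂ] H₂)),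
      x = T A B} : Set (K →L[ℂ] K)) with hSN
  have hCg : IsCentralSupport (genVN SG) (T A B) C := by rw [hSG]; exact hC
  have hDn : IsCentralSupport (genVN SN) (T A B) D := by rw [hSN]; exact hD
  have memE : ∀ X, X ∈ (R₁ : Set (H₁ →L[ℂ] H₁)) → ∀ Y,
      Y ∈ evenPart (R₂ : Set (H₂ →L[ℂ] H₂)) Γ₂ → T X Y ∈ SG := by
    intro X hX Y hY; rw [hSG]; exact Or.inl ⟨X, hX, Y, hY, rfl⟩
  have memO : ∀ X, X ∈ (R₁ : Set (H₁ →L[ℂ] H₁)) → ∀ Y,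
      Y ∈ oddPart (R₂ : Set (H₂ →L[ℂ] H₂)) Γ₂ → T (X * Γ₁) Y ∈ SG := by
    intro X hX Y hY; rw [hSG]; exact Or.inr ⟨X, hX, Y, hY, rfl⟩
  have memN : ∀ X, X ∈ (R₁ : Set (H₁ →L[ℂ] H₁)) → ∀ Y,
      Y ∈ (R₂ : Set (H₂ →L[ℂ] H₂)) → T X Y ∈ SN := by
    intro X hX Y hY; rw [hSN]; exact ⟨X, hX, Y, hY, rfl⟩
  have memGcases : ∀ s ∈ SG,
      (∃ X ∈ (R₁ : Set (H₁ →L[ℂ] H₁)), ∃ Y ∈ evenPart (R₂ : Set (H₂ →L[ℂ] H₂)) Γ₂, s = T X Y) ∨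
      (∃ X ∈ (R₁ : Set (H₁ →L[ℂ] H₁)), ∃ Y ∈ oddPart (R₂ : Set (H₂ →L[ℂ] H₂)) Γ₂,
        s = T (X * Γ₁) Y) := by
    intro s hs; rw [hSG] at hs; exact hs
  have memNcases : ∀ s ∈ SN,
      ∃ X ∈ (R₁ : Set (H₁ →L[ℂ] H₁)), ∃ Y ∈ (R₂ : Set (H₂ →L[ℂ] H₂)), s = T X Y := by
    intro s hs; rw [hSN] at hs; exact hs
  -- even/odd decomposition in R₂
  have hsplit : ∀ B' ∈ (R₂ : Set (H₂ →L[ℂ] H₂)), ∃ Be Bo : H₂ →L[ℂ] H₂,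
      Be ∈ evenPart (R₂ : Set (H₂ →L[ℂ] H₂)) Γ₂ ∧ Bo ∈ oddPart (R₂ : Set (H₂ →L[ℂ] H₂)) Γ₂ ∧
      Be + Bo = B' := by
    intro B' hB'
    have hG : Γ₂ * B' * Γ₂ ∈ (R₂ : Set (H₂ →L[ℂ] H₂)) := hR₂ B' hB'
    simp only [SetLike.mem_coe] at hB' hG
    refine ⟨(2⁻¹:ℂ) • (B' + Γ₂ * B' * Γ₂), (2⁻¹:ℂ) • (B' - Γ₂ * B' * Γ₂), ⟨?_, ?_⟩, ⟨?_, ?_⟩, ?_⟩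
    · exact SetLike.mem_coe.mpr (R₂.smul_mem (R₂.add_mem hB' hG) _)
    · rw [mul_smul_comm, smul_mul_assoc]
      congr 1
      calc Γ₂ * (B' + Γ₂ * B' * Γ₂) * Γ₂
          = Γ₂ * B' * Γ₂ + Γ₂ * (Γ₂ * B' * Γ₂) * Γ₂ := by rw [mul_add, add_mul]
        _ = Γ₂ * B' * Γ₂ + B' := by rw [conj_invol19 hΓ₂2]
        _ = B' + Γ₂ * B' * Γ₂ := add_comm _ _
    · exact SetLike.mem_coe.mpr (R₂.smul_mem (R₂.sub_mem hB' hG) _)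
    · rw [mul_smul_comm, smul_mul_assoc, ← smul_neg]
      congr 1
      calc Γ₂ * (B' - Γ₂ * B' * Γ₂) * Γ₂
          = Γ₂ * B' * Γ₂ - Γ₂ * (Γ₂ * B' * Γ₂) * Γ₂ := by rw [mul_sub, sub_mul]
        _ = Γ₂ * B' * Γ₂ - B' := by rw [conj_invol19 hΓ₂2]
        _ = -(B' - Γ₂ * B' * Γ₂) := (neg_sub _ _).symm
    · module
  -- Ad_V, Ad_W stability
  have hVSg : ∀ s ∈ SG, V * s * V ∈ SG := by
    intro s hs
    rcases memGcases s hs with ⟨X, hX, Y, hY, rfl⟩ | ⟨X, hX, Y, hY, rfl⟩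
    · rw [hconjV]
      exact memE _ (hR₁ X hX) _ hY
    · rw [hconjV, show Γ₁ * (X * Γ₁) * Γ₁ = (Γ₁ * X * Γ₁) * Γ₁ from by noncomm_ring]
      exact memO _ (hR₁ X hX) _ hY
  have hVSn : ∀ s ∈ SN, V * s * V ∈ SN := by
    intro s hs
    rcases memNcases s hs with ⟨X, hX, Y, hY, rfl⟩
    rw [hconjV]
    exact memN _ (hR₁ X hX) _ hY
  have hWSn : ∀ s ∈ SN, W * s * W ∈ SN := by
    intro s hs
    rcases memNcases s hs with ⟨X, hX, Y, hY, rfl⟩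
    rw [hconjW]
    exact memN _ hX _ (hR₂ Y hY)
  have hWSg : ∀ s ∈ SG, W * s * W ∈ genVN SG := by
    intro s hs
    rcases memGcases s hs with ⟨X, hX, Y, hY, rfl⟩ | ⟨X, hX, Y, hY, rfl⟩
    · rw [hconjW, hY.2]
      exact Set.subset_centralizer_centralizer (memE _ hX _ hY)
    · rw [hconjW, hY.2, hTneg]
      exact neg_mem_centralizer19 (Set.subset_centralizer_centralizer (memO _ hX _ hY))
  -- C and D commute with V and W
  have hVT : V * T A B * V = T A B := by rw [hconjV, hA.2]
  have hWT : W * T A B * W = T A B := by rw [hconjW, hB.2]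
  have hCV : V * C = C * V := ad_commute_centralSupport19 hVstar hV2
    (fun s hs => Set.subset_centralizer_centralizer (hVSg s hs)) hVT hCg
  have hCW : W * C = C * W := ad_commute_centralSupport19 hWstar hW2 hWSg hWT hCg
  have hDV : V * D = D * V := ad_commute_centralSupport19 hVstar hV2
    (fun s hs => Set.subset_centralizer_centralizer (hVSn s hs)) hVT hDn
  have hDW : W * D = D * W := ad_commute_centralSupport19 hWstar hW2
    (fun s hs => Set.subset_centralizer_centralizer (hWSn s hs)) hWT hDn
  obtain ⟨hDm, hDc⟩ := mem_centerSet_genVN19.mp hDn.1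
  obtain ⟨hCm, hCc⟩ := mem_centerSet_genVN19.mp hCg.1
  have hDm' : ∀ m ∈ Set.centralizer SN, m * D = D * m := hDm
  have hCm' : ∀ m ∈ Set.centralizer SG, m * C = C * m := hCm
  -- Step A : D commutes with the generators of the graded TP
  have hDSgc : ∀ s ∈ SG, s * D = D * s := by
    intro s hs
    rcases memGcases s hs with ⟨X, hX, Y, hY, rfl⟩ | ⟨X, hX, Y, hY, rfl⟩
    · exact hDc _ (memN _ hX _ hY.1)
    · have h1 : T X Y * D = D * T X Y := hDc _ (memN _ hX _ hY.1)
      rw [← ht_e2 X Y]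
      calc T X Y * V * D = T X Y * (V * D) := by rw [mul_assoc]
        _ = T X Y * (D * V) := by rw [hDV]
        _ = T X Y * D * V := by rw [mul_assoc]
        _ = D * T X Y * V := by rw [h1]
        _ = D * (T X Y * V) := by rw [mul_assoc]
  -- Step B : D belongs to the graded TP
  have hDMgm : ∀ y ∈ Set.centralizer SG, y * D = D * y := by
    intro y hy
    have hVyVc : V * y * V ∈ Set.centralizer SG :=
      ad_mem_centralizer19 hV2
        (fun s hs => Set.subset_centralizer_centralizer (hVSg s hs)) hy
    set yp := (2⁻¹:ℂ) • (y + V * y * V) with hypdef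
    set ym := (2⁻¹:ℂ) • (y - V * y * V) with hymdef
    have hypc : yp ∈ Set.centralizer SG :=
      smul_mem_centralizer19 (add_mem_centralizer19 hy hVyVc)
    have hymc : ym ∈ Set.centralizer SG :=
      smul_mem_centralizer19 (sub_mem_centralizer19 hy hVyVc)
    have e1 : V * (V * y * V) = y * V := by
      calc V * (V * y * V) = (V * V) * (y * V) := by noncomm_ring
        _ = y * V := by rw [hV2, one_mul]
    have e2 : (V * y * V) * V = V * y := by
      calc (V * y * V) * V = (V * y) * (V * V) := by noncomm_ring
        _ = V * y := by rw [hV2, mul_one]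
    have hypV : V * yp = yp * V := by
      rw [hypdef, mul_smul_comm, smul_mul_assoc, mul_add, add_mul, e1, e2, add_comm]
    have hymV : V * ym = -(ym * V) := by
      rw [hymdef, mul_smul_comm, smul_mul_assoc, mul_sub, sub_mul, e1, e2, ← smul_neg, neg_sub]
    have hsum : yp + ym = y := by rw [hypdef, hymdef]; module
    have hypN : yp ∈ Set.centralizer SN := by
      intro s hs
      rcases memNcases s hs with ⟨X, hX, Y, hY, rfl⟩
      obtain ⟨Ye, Yo, hYe, hYo, hsumY⟩ := hsplit Y hY
      have hTsum : T X Y = T X Ye + T X Yo := by rw [← hsumY, hTaddr]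
      have h1 : T X Ye * yp = yp * T X Ye := hypc _ (memE _ hX _ hYe)
      have h2' : T (X * Γ₁) Yo * yp = yp * T (X * Γ₁) Yo := hypc _ (memO _ hX _ hYo)
      have h2 : T X Yo * yp = yp * T X Yo := by
        rw [← ht_e1 X Yo]
        calc T (X * Γ₁) Yo * V * yp = T (X * Γ₁) Yo * (V * yp) := by rw [mul_assoc]
          _ = T (X * Γ₁) Yo * (yp * V) := by rw [hypV]
          _ = T (X * Γ₁) Yo * yp * V := by rw [mul_assoc]
          _ = yp * T (X * Γ₁) Yo * V := by rw [h2']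
          _ = yp * (T (X * Γ₁) Yo * V) := by rw [mul_assoc]
      rw [hTsum, add_mul, mul_add, h1, h2]
    have hDyp : yp * D = D * yp := hDm' yp hypN
    have hzN : ym * W ∈ Set.centralizer SN := by
      intro s hs
      rcases memNcases s hs with ⟨X, hX, Y, hY, rfl⟩
      obtain ⟨Ye, Yo, hYe, hYo, hsumY⟩ := hsplit Y hY
      have hTsum : T X Y = T X Ye + T X Yo := by rw [← hsumY, hTaddr]
      have hWe : W * T X Ye = T X Ye * W := hWcomm X hYe.2
      have h1 : T X Ye * ym = ym * T X Ye := hymc _ (memE _ hX _ hYe)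
      have c1 : T X Ye * (ym * W) = (ym * W) * T X Ye := by
        calc T X Ye * (ym * W) = T X Ye * ym * W := by rw [mul_assoc]
          _ = ym * T X Ye * W := by rw [h1]
          _ = ym * (T X Ye * W) := by rw [mul_assoc]
          _ = ym * (W * T X Ye) := by rw [hWe]
          _ = ym * W * T X Ye := by rw [mul_assoc]
      have h2' : T (X * Γ₁) Yo * ym = ym * T (X * Γ₁) Yo := hymc _ (memO _ hX _ hYo)
      have hanti : T X Yo * ym = -(ym * T X Yo) := by
        rw [← ht_e1 X Yo]
        calc T (X * Γ₁) Yo * V * ym = T (X * Γ₁) Yo * (V * ym) := by rw [mul_assoc]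
          _ = T (X * Γ₁) Yo * -(ym * V) := by rw [hymV]
          _ = -(T (X * Γ₁) Yo * ym * V) := by rw [mul_neg, mul_assoc]
          _ = -(ym * T (X * Γ₁) Yo * V) := by rw [h2']
          _ = -(ym * (T (X * Γ₁) Yo * V)) := by rw [mul_assoc]
      have hWo : W * T X Yo = -(T X Yo * W) := hWanti X hYo.2
      have c2 : T X Yo * (ym * W) = (ym * W) * T X Yo := by
        calc T X Yo * (ym * W) = T X Yo * ym * W := by rw [mul_assoc]
          _ = -(ym * T X Yo) * W := by rw [hanti]
          _ = -(ym * (T X Yo * W)) := by rw [neg_mul, mul_assoc]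
          _ = ym * -(T X Yo * W) := by rw [mul_neg]
          _ = ym * (W * T X Yo) := by rw [← hWo]
          _ = ym * W * T X Yo := by rw [mul_assoc]
      rw [hTsum, add_mul, mul_add, c1, c2]
    have hDz : (ym * W) * D = D * (ym * W) := hDm' _ hzN
    have hDym : ym * D = D * ym := by
      calc ym * D = ym * (W * W) * D := by rw [hW2, mul_one]
        _ = (ym * W) * (W * D) := by noncomm_ring
        _ = (ym * W) * (D * W) := by rw [hDW]
        _ = ((ym * W) * D) * W := by noncomm_ring
        _ = (D * (ym * W)) * W := by rw [hDz]
        _ = D * (ym * (W * W)) := by noncomm_ring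
        _ = D * ym := by rw [hW2, mul_one]
    calc y * D = (yp + ym) * D := by rw [hsum]
      _ = yp * D + ym * D := add_mul _ _ _
      _ = D * yp + D * ym := by rw [hDyp, hDym]
      _ = D * (yp + ym) := (mul_add _ _ _).symm
      _ = D * y := by rw [hsum]
  have hDMg : D ∈ genVN SG := hDMgm
  have hDcentG : D ∈ centerSet (genVN SG) :=
    mem_centerSet_genVN19.mpr ⟨hDMg, fun s hs => hDSgc s hs⟩
  -- Step C : C commutes with the generators of the normal TP
  have hCSnc : ∀ s ∈ SN, s * C = C * s := by
    intro s hs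
    rcases memNcases s hs with ⟨X, hX, Y, hY, rfl⟩
    obtain ⟨Ye, Yo, hYe, hYo, hsumY⟩ := hsplit Y hY
    have hTsum : T X Y = T X Ye + T X Yo := by rw [← hsumY, hTaddr]
    have h1 : T X Ye * C = C * T X Ye := hCc _ (memE _ hX _ hYe)
    have h2' : T (X * Γ₁) Yo * C = C * T (X * Γ₁) Yo := hCc _ (memO _ hX _ hYo)
    have h2 : T X Yo * C = C * T X Yo := by
      rw [← ht_e1 X Yo]
      calc T (X * Γ₁) Yo * V * C = T (X * Γ₁) Yo * (V * C) := by rw [mul_assoc]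
        _ = T (X * Γ₁) Yo * (C * V) := by rw [hCV]
        _ = T (X * Γ₁) Yo * C * V := by rw [mul_assoc]
        _ = C * T (X * Γ₁) Yo * V := by rw [h2']
        _ = C * (T (X * Γ₁) Yo * V) := by rw [mul_assoc]
    rw [hTsum, add_mul, mul_add, h1, h2]
  -- Step D : C belongs to the normal TP
  have hCMnm : ∀ y ∈ Set.centralizer SN, y * C = C * y := by
    intro y hy
    have hVyVc : V * y * V ∈ Set.centralizer SN :=
      ad_mem_centralizer19 hV2
        (fun s hs => Set.subset_centralizer_centralizer (hVSn s hs)) hy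
    set yp := (2⁻¹:ℂ) • (y + V * y * V) with hypdef
    set ym := (2⁻¹:ℂ) • (y - V * y * V) with hymdef
    have hypc : yp ∈ Set.centralizer SN :=
      smul_mem_centralizer19 (add_mem_centralizer19 hy hVyVc)
    have hymc : ym ∈ Set.centralizer SN :=
      smul_mem_centralizer19 (sub_mem_centralizer19 hy hVyVc)
    have e1 : V * (V * y * V) = y * V := by
      calc V * (V * y * V) = (V * V) * (y * V) := by noncomm_ring
        _ = y * V := by rw [hV2, one_mul]
    have e2 : (V * y * V) * V = V * y := by
      calc (V * y * V) * V = (V * y) * (V * V) := by noncomm_ring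
        _ = V * y := by rw [hV2, mul_one]
    have hypV : V * yp = yp * V := by
      rw [hypdef, mul_smul_comm, smul_mul_assoc, mul_add, add_mul, e1, e2, add_comm]
    have hymV : V * ym = -(ym * V) := by
      rw [hymdef, mul_smul_comm, smul_mul_assoc, mul_sub, sub_mul, e1, e2, ← smul_neg, neg_sub]
    have hsum : yp + ym = y := by rw [hypdef, hymdef]; module
    have hypG : yp ∈ Set.centralizer SG := by
      intro s hs
      rcases memGcases s hs with ⟨X, hX, Y, hY, rfl⟩ | ⟨X, hX, Y, hY, rfl⟩
      · exact hypc _ (memN _ hX _ hY.1)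
      · have h1 : T X Y * yp = yp * T X Y := hypc _ (memN _ hX _ hY.1)
        rw [← ht_e2 X Y]
        calc T X Y * V * yp = T X Y * (V * yp) := by rw [mul_assoc]
          _ = T X Y * (yp * V) := by rw [hypV]
          _ = T X Y * yp * V := by rw [mul_assoc]
          _ = yp * T X Y * V := by rw [h1]
          _ = yp * (T X Y * V) := by rw [mul_assoc]
    have hCyp : yp * C = C * yp := hCm' yp hypG
    have hzG : ym * W ∈ Set.centralizer SG := by
      intro s hs
      rcases memGcases s hs with ⟨X, hX, Y, hY, rfl⟩ | ⟨X, hX, Y, hY, rfl⟩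
      · have h1 : T X Y * ym = ym * T X Y := hymc _ (memN _ hX _ hY.1)
        have hWe : W * T X Y = T X Y * W := hWcomm X hY.2
        calc T X Y * (ym * W) = T X Y * ym * W := by rw [mul_assoc]
          _ = ym * T X Y * W := by rw [h1]
          _ = ym * (T X Y * W) := by rw [mul_assoc]
          _ = ym * (W * T X Y) := by rw [hWe]
          _ = ym * W * T X Y := by rw [mul_assoc]
      · have h1 : T X Y * ym = ym * T X Y := hymc _ (memN _ hX _ hY.1)
        have hWo : W * T X Y = -(T X Y * W) := hWanti X hY.2
        rw [← ht_e2 X Y]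
        calc T X Y * V * (ym * W) = T X Y * (V * ym) * W := by noncomm_ring
          _ = T X Y * -(ym * V) * W := by rw [hymV]
          _ = -(T X Y * ym * (V * W)) := by noncomm_ring
          _ = -(ym * T X Y * (V * W)) := by rw [h1]
          _ = -(ym * T X Y * (W * V)) := by rw [hVW]
          _ = -(ym * (T X Y * W)) * V := by noncomm_ring
          _ = (ym * -(T X Y * W)) * V := by rw [mul_neg]
          _ = (ym * (W * T X Y)) * V := by rw [← hWo]
          _ = ym * W * (T X Y * V) := by noncomm_ring
    have hCz : (ym * W) * C = C * (ym * W) := hCm' _ hzG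
    have hCym : ym * C = C * ym := by
      calc ym * C = ym * (W * W) * C := by rw [hW2, mul_one]
        _ = (ym * W) * (W * C) := by noncomm_ring
        _ = (ym * W) * (C * W) := by rw [hCW]
        _ = ((ym * W) * C) * W := by noncomm_ring
        _ = (C * (ym * W)) * W := by rw [hCz]
        _ = C * (ym * (W * W)) := by noncomm_ring
        _ = C * ym := by rw [hW2, mul_one]
    calc y * C = (yp + ym) * C := by rw [hsum]
      _ = yp * C + ym * C := add_mul _ _ _
      _ = C * yp + C * ym := by rw [hCyp, hCym]
      _ = C * (yp + ym) := (mul_add _ _ _).symm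
      _ = C * y := by rw [hsum]
  have hCMn : C ∈ genVN SN := hCMnm
  have hCcentN : C ∈ centerSet (genVN SN) :=
    mem_centerSet_genVN19.mpr ⟨hCMn, fun s hs => hCSnc s hs⟩
  -- Conclusion
  have h1 : C * D = C := hCg.2.2.2 D hDcentG hDn.2.1 hDn.2.2.1
  have h2 : D * C = D := hDn.2.2.2 C hCcentN hCg.2.1 hCg.2.2.1
  have h3 : C * D = D * C := hCg.1.2 D hDMg
  calc C = C * D := h1.symm
    _ = D * C := h3
    _ = D := h2
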